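/- Let 𝒜 ⊆ P(ℕ) be an almost disjoint family. Then Ψ(𝒜) is strongly star-Hurewicz if and only if |𝒜| < 𝔟. -/

import Mathlib

open Set Filter

universe u

/-- Least cardinality of a cofinal subset of a preorder. -/
noncomputable def poCof (α : Type u) [Preorder α] : Cardinal.{u} :=
  sInf { c | ∃ S : Set α, (∀ a : α, ∃ b ∈ S, a ≤ b) ∧ Cardinal.mk S = c }

/-- `cof([X]^ℵ₀)`: cofinality of the family of countably infinite subsets of `X`,
ordered by inclusion. -/
noncomputable def ctblCof (X : Type u) : Cardinal.{u} :=
  poCof { A : Set X // A.Countable ∧ A.Infinite }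

/-- The dominating number 𝔡. -/
noncomputable def dNum : Cardinal :=
  sInf { c | ∃ D : Set (ℕ → ℕ),
    (∀ f : ℕ → ℕ, ∃ g ∈ D, ∀ᶠ n in atTop, f n ≤ g n) ∧ Cardinal.mk D = c }

/-- The unbounding number 𝔟. -/
noncomputable def bNum : Cardinal :=
  sInf { c | ∃ B : Set (ℕ → ℕ),
    (∀ g : ℕ → ℕ, ∃ f ∈ B, ¬ ∀ᶠ n in atTop, f n ≤ g n) ∧ Cardinal.mk B = c }

/-- An almost disjoint family on ℕ. -/
def AlmostDisjoint (𝒜 : Set (Set ℕ)) : Prop :=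
  (∀ A ∈ 𝒜, A.Infinite) ∧ ∀ A ∈ 𝒜, ∀ B ∈ 𝒜, A ≠ B → (A ∩ B).Finite

/-- The underlying set of the Isbell–Mrówka space `Ψ(𝒜) = ℕ ∪ 𝒜`. -/
abbrev PsiSpace (𝒜 : Set (Set ℕ)) : Type := ℕ ⊕ ↥𝒜

/-- The Isbell–Mrówka topology: naturals are isolated, and basic neighborhoods
of `A ∈ 𝒜` are `{A} ∪ (A \ F)` for finite `F`. -/
instance psiTop (𝒜 : Set (Set ℕ)) : TopologicalSpace (PsiSpace 𝒜) where
  IsOpen U := ∀ A : 𝒜, Sum.inr A ∈ U → { n : ℕ | n ∈ (A : Set ℕ) ∧ Sum.inl n ∉ U }.Finite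
  isOpen_univ := by
    intro A _
    convert Set.finite_empty using 1
    ext n; simp
  isOpen_inter := by
    intro U V hU hV A hA
    apply ((hU A hA.1).union (hV A hA.2)).subset
    rintro n ⟨h1, h2⟩
    by_cases h : Sum.inl n ∈ U
    · exact Or.inr ⟨h1, fun hv => h2 ⟨h, hv⟩⟩
    · exact Or.inl ⟨h1, h⟩
  isOpen_sUnion := by
    intro s hs A hA
    obtain ⟨t, ht, hAt⟩ := hA
    apply (hs t ht A hAt).subset
    rintro n ⟨h1, h2⟩
    exact ⟨h1, fun h => h2 ⟨t, ht, h⟩⟩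

/-- `st(S, 𝒰) = ⋃ {U ∈ 𝒰 : U ∩ S ≠ ∅}`. -/
def starSet {X : Type*} (S : Set X) (𝒰 : Set (Set X)) : Set X :=
  ⋃₀ { U ∈ 𝒰 | (U ∩ S).Nonempty }

def StarMenger (X : Type*) [TopologicalSpace X] : Prop :=
  ∀ 𝒰 : ℕ → Set (Set X), (∀ n, ∀ U ∈ 𝒰 n, IsOpen U) → (∀ n, ⋃₀ 𝒰 n = univ) →
    ∃ ℱ : ℕ → Set (Set X), (∀ n, ℱ n ⊆ 𝒰 n ∧ (ℱ n).Finite) ∧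
      (⋃ n, starSet (⋃₀ ℱ n) (𝒰 n)) = univ

def StarHurewicz (X : Type*) [TopologicalSpace X] : Prop :=
  ∀ 𝒰 : ℕ → Set (Set X), (∀ n, ∀ U ∈ 𝒰 n, IsOpen U) → (∀ n, ⋃₀ 𝒰 n = univ) →
    ∃ ℱ : ℕ → Set (Set X), (∀ n, ℱ n ⊆ 𝒰 n ∧ (ℱ n).Finite) ∧
      ∀ x : X, ∀ᶠ n in atTop, x ∈ starSet (⋃₀ ℱ n) (𝒰 n)

def StarRothberger (X : Type*) [TopologicalSpace X] : Prop :=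
  ∀ 𝒰 : ℕ → Set (Set X), (∀ n, ∀ U ∈ 𝒰 n, IsOpen U) → (∀ n, ⋃₀ 𝒰 n = univ) →
    ∃ U : ℕ → Set X, (∀ n, U n ∈ 𝒰 n) ∧ (⋃ n, starSet (U n) (𝒰 n)) = univ

def StronglyStarMenger (X : Type*) [TopologicalSpace X] : Prop :=
  ∀ 𝒰 : ℕ → Set (Set X), (∀ n, ∀ U ∈ 𝒰 n, IsOpen U) → (∀ n, ⋃₀ 𝒰 n = univ) →
    ∃ F : ℕ → Set X, (∀ n, (F n).Finite) ∧ (⋃ n, starSet (F n) (𝒰 n)) = univ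

def StronglyStarHurewicz (X : Type*) [TopologicalSpace X] : Prop :=
  ∀ 𝒰 : ℕ → Set (Set X), (∀ n, ∀ U ∈ 𝒰 n, IsOpen U) → (∀ n, ⋃₀ 𝒰 n = univ) →
    ∃ F : ℕ → Set X, (∀ n, (F n).Finite) ∧
      ∀ x : X, ∀ᶠ n in atTop, x ∈ starSet (F n) (𝒰 n)

/-!
If `Ψ(𝒜)` is strongly star-Hurewicz, then for any `h : 𝒜 → ℕ → ℕ` apply the property to the covers
by the isolated points and the tails `{A} ∪ {m ∈ A | m ≥ h A n}`: apart from the countably many `A`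
that occur in some `F n`, the star condition forces `h A n` below the largest natural number in
`F n`, so every family of at most `|𝒜|` functions is bounded, and `|𝒜| < 𝔟`.
Conversely, each `A` has a neighbourhood `U A n ∈ 𝒰 n` containing some natural number `m A n`; if
`|𝒜| < 𝔟` the functions `m A` are eventually bounded by one `g`, and `F n = [0, max (g n) n]` works.
-/

def EventuallyBddAbove (S : Set (ℕ → ℕ)) : Prop :=
  ∃ g : ℕ → ℕ, ∀ f ∈ S, f ≤ᶠ[atTop] g

namespace EventuallyBddAbove

theorem mono {S T : Set (ℕ → ℕ)} (hT : EventuallyBddAbove T) (hST : S ⊆ T) :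
    EventuallyBddAbove S :=
  let ⟨g, hg⟩ := hT
  ⟨g, fun f hf => hg f (hST hf)⟩

theorem union {S T : Set (ℕ → ℕ)} (hS : EventuallyBddAbove S) (hT : EventuallyBddAbove T) :
    EventuallyBddAbove (S ∪ T) := by
  obtain ⟨g, hg⟩ := hS
  obtain ⟨g', hg'⟩ := hT
  refine ⟨g ⊔ g', fun f hf => ?_⟩
  rcases hf with hf | hf
  · exact (hg f hf).trans (Eventually.of_forall fun n => le_sup_left)
  · exact (hg' f hf).trans (Eventually.of_forall fun n => le_sup_right)

end EventuallyBddAbove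

/-- The diagonal bound `n ↦ max_{k ≤ n} e k n` of an enumeration `e` eventually dominates
each `e k`. -/
theorem Set.Countable.eventuallyBddAbove {S : Set (ℕ → ℕ)} (hS : S.Countable) :
    EventuallyBddAbove S := by
  rcases S.eq_empty_or_nonempty with rfl | hne
  · exact ⟨0, fun f hf => hf.elim⟩
  obtain ⟨e, rfl⟩ := hS.exists_eq_range hne
  refine ⟨fun n => (Finset.range (n + 1)).sup (fun k => e k n), ?_⟩
  rintro _ ⟨k, rfl⟩
  filter_upwards [eventually_ge_atTop k] with n hn
  exact Finset.le_sup (f := fun k => e k n) (Finset.mem_range.mpr (Nat.lt_succ_of_le hn))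

theorem eventuallyBddAbove_of_mk_lt_bNum {S : Set (ℕ → ℕ)} (hS : Cardinal.mk S < bNum) :
    EventuallyBddAbove S := by
  by_contra hunb
  refine hS.not_ge (csInf_le (OrderBot.bddBelow _) ⟨S, fun g => ?_, rfl⟩)
  by_contra! hg
  exact hunb ⟨g, hg⟩

theorem exists_not_eventuallyBddAbove_mk_eq_bNum :
    ∃ B : Set (ℕ → ℕ), ¬ EventuallyBddAbove B ∧ Cardinal.mk B = bNum := by
  have hne : { c | ∃ B : Set (ℕ → ℕ),
      (∀ g : ℕ → ℕ, ∃ f ∈ B, ¬ ∀ᶠ n in atTop, f n ≤ g n) ∧ Cardinal.mk B = c }.Nonempty := by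
    refine ⟨_, univ, fun g => ⟨g + 1, trivial, fun h => ?_⟩, rfl⟩
    obtain ⟨n, hn⟩ := h.exists
    exact Nat.not_succ_le_self _ hn
  obtain ⟨B, hB, hcard⟩ := csInf_mem hne
  refine ⟨B, fun ⟨g, hg⟩ => ?_, hcard⟩
  obtain ⟨f, hf, hfg⟩ := hB g
  exact hfg (hg f hf)

theorem mem_starSet_of_mem {X : Type*} {S U : Set X} {𝒰 : Set (Set X)} {x y : X}
    (hU : U ∈ 𝒰) (hx : x ∈ U) (hy : y ∈ U) (hyS : y ∈ S) : x ∈ starSet S 𝒰 :=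
  ⟨U, ⟨hU, y, hy, hyS⟩, hx⟩

theorem subset_starSet {X : Type*} {S : Set X} {𝒰 : Set (Set X)} (h𝒰 : ⋃₀ 𝒰 = univ) :
    S ⊆ starSet S 𝒰 := by
  intro x hx
  obtain ⟨U, hU, hxU⟩ := mem_sUnion.mp (h𝒰 ▸ mem_univ x)
  exact mem_starSet_of_mem hU hxU hxU hx

namespace PsiSpace

variable {𝒜 : Set (Set ℕ)}

theorem isOpen_iff {U : Set (PsiSpace 𝒜)} :
    IsOpen U ↔ ∀ A : 𝒜, Sum.inr A ∈ U → {n | n ∈ (A : Set ℕ) ∧ Sum.inl n ∉ U}.Finite :=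
  Iff.rfl

theorem isOpen_singleton_inl (m : ℕ) : IsOpen ({Sum.inl m} : Set (PsiSpace 𝒜)) :=
  isOpen_iff.mpr fun A hA => by simp at hA

theorem exists_inl_mem_of_isOpen {U : Set (PsiSpace 𝒜)} {A : 𝒜} (hA : (A : Set ℕ).Infinite)
    (hU : IsOpen U) (hAU : Sum.inr A ∈ U) : ∃ m, Sum.inl m ∈ U := by
  obtain ⟨m, hmA, hm⟩ := (hA.sdiff (isOpen_iff.mp hU A hAU)).nonempty
  exact ⟨m, by_contra fun h => hm ⟨hmA, h⟩⟩

theorem finite_inl_preimage {F : Set (PsiSpace 𝒜)} (hF : F.Finite) :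
    (Sum.inl ⁻¹' F).Finite :=
  hF.preimage Sum.inl_injective.injOn

theorem finite_inr_preimage {F : Set (PsiSpace 𝒜)} (hF : F.Finite) :
    (Sum.inr ⁻¹' F).Finite :=
  hF.preimage Sum.inr_injective.injOn

def tail (A : 𝒜) (k : ℕ) : Set (PsiSpace 𝒜) :=
  insert (Sum.inr A) (Sum.inl '' {m ∈ (A : Set ℕ) | k ≤ m})

theorem eq_of_inr_mem_tail {A B : 𝒜} {k : ℕ} (h : Sum.inr B ∈ tail A k) : B = A := by
  simpa [tail] using h

theorem isOpen_tail (A : 𝒜) (k : ℕ) : IsOpen (tail A k) := by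
  refine isOpen_iff.mpr fun B hB => ?_
  obtain rfl := eq_of_inr_mem_tail hB
  refine (finite_Iio k).subset fun m ⟨hmA, hm⟩ => ?_
  by_contra hkm
  exact hm (Or.inr ⟨m, ⟨hmA, not_lt.mp hkm⟩, rfl⟩)

def tailCover (t : 𝒜 → ℕ) : Set (Set (PsiSpace 𝒜)) :=
  range (fun m => {Sum.inl m}) ∪ range (fun A => tail A (t A))

theorem isOpen_of_mem_tailCover {t : 𝒜 → ℕ} {U : Set (PsiSpace 𝒜)} (hU : U ∈ tailCover t) :
    IsOpen U := by
  rcases hU with ⟨m, rfl⟩ | ⟨A, rfl⟩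
  exacts [isOpen_singleton_inl m, isOpen_tail A (t A)]

theorem sUnion_tailCover (t : 𝒜 → ℕ) : ⋃₀ tailCover t = univ := by
  refine eq_univ_of_forall ?_
  rintro (m | A)
  · exact ⟨{Sum.inl m}, Or.inl ⟨m, rfl⟩, rfl⟩
  · exact ⟨tail A (t A), Or.inr ⟨A, rfl⟩, mem_insert _ _⟩

/-- The only member of `tailCover t` containing `A` is `tail A (t A)`. -/
theorem inr_mem_or_exists_le_of_mem_starSet {t : 𝒜 → ℕ} {F : Set (PsiSpace 𝒜)} {A : 𝒜}
    (h : Sum.inr A ∈ starSet F (tailCover t)) :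
    Sum.inr A ∈ F ∨ ∃ m, t A ≤ m ∧ Sum.inl m ∈ F := by
  obtain ⟨U, ⟨hU, y, hyU, hyF⟩, hAU⟩ := h
  rcases hU with ⟨m, rfl⟩ | ⟨B, rfl⟩
  · simp at hAU
  obtain rfl := eq_of_inr_mem_tail hAU
  rcases hyU with rfl | ⟨m, ⟨-, hm⟩, rfl⟩
  exacts [Or.inl hyF, Or.inr ⟨m, hm, hyF⟩]

theorem eventuallyBddAbove_range_of_stronglyStarHurewicz
    (hS : StronglyStarHurewicz (PsiSpace 𝒜)) (h : 𝒜 → ℕ → ℕ) :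
    EventuallyBddAbove (range h) := by
  obtain ⟨F, hF, hstar⟩ := hS (fun n => tailCover (h · n))
    (fun n _ => isOpen_of_mem_tailCover) (fun n => sUnion_tailCover _)
  choose N hN using fun n => (finite_inl_preimage (hF n)).bddAbove
  set C : Set 𝒜 := ⋃ n, Sum.inr ⁻¹' F n
  have hC : C.Countable := countable_iUnion fun n => (finite_inr_preimage (hF n)).countable
  have hbdd : EventuallyBddAbove (h '' Cᶜ) := by
    refine ⟨N, ?_⟩
    rintro _ ⟨A, hAC, rfl⟩
    filter_upwards [hstar (Sum.inr A)] with n hn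
    rcases inr_mem_or_exists_le_of_mem_starSet hn with hAF | ⟨m, hm, hmF⟩
    · exact absurd (mem_iUnion.mpr ⟨n, hAF⟩ : A ∈ C) hAC
    · exact hm.trans (hN n hmF)
  refine ((hC.image h).eventuallyBddAbove.union hbdd).mono ?_
  rintro _ ⟨A, rfl⟩
  by_cases hA : A ∈ C
  exacts [Or.inl ⟨A, hA, rfl⟩, Or.inr ⟨A, hA, rfl⟩]

theorem mk_lt_bNum_of_stronglyStarHurewicz (hS : StronglyStarHurewicz (PsiSpace 𝒜)) :
    Cardinal.mk 𝒜 < bNum := by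
  by_contra! hle
  obtain ⟨B, hB, hcard⟩ := exists_not_eventuallyBddAbove_mk_eq_bNum
  obtain ⟨ι⟩ := Cardinal.le_def _ _ |>.mp (hcard ▸ hle)
  have : Nonempty B := by
    by_contra! hempty
    exact hB ⟨0, fun f hf => (hempty.false ⟨f, hf⟩).elim⟩
  refine hB ((eventuallyBddAbove_range_of_stronglyStarHurewicz hS
    (Subtype.val ∘ Function.invFun ι)).mono ?_)
  intro f hf
  exact ⟨ι ⟨f, hf⟩, by simp [Function.leftInverse_invFun ι.injective _]⟩

theorem stronglyStarHurewicz_of_mk_lt_bNum (hinf : ∀ A ∈ 𝒜, A.Infinite)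
    (h𝒜 : Cardinal.mk 𝒜 < bNum) : StronglyStarHurewicz (PsiSpace 𝒜) := by
  intro 𝒰 hopen hcov
  have hU : ∀ (A : 𝒜) (n : ℕ), ∃ U ∈ 𝒰 n, Sum.inr A ∈ U := fun A n =>
    mem_sUnion.mp (hcov n ▸ mem_univ _)
  choose U hU𝒰 hAU using hU
  choose m hm using fun (A : 𝒜) n =>
    exists_inl_mem_of_isOpen (hinf A A.2) (hopen n _ (hU𝒰 A n)) (hAU A n)
  obtain ⟨g, hg⟩ := eventuallyBddAbove_of_mk_lt_bNum (Cardinal.mk_range_le.trans_lt h𝒜)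
  refine ⟨fun n => Sum.inl '' Iic (max (g n) n), fun n => (finite_Iic _).image _, ?_⟩
  rintro (k | A)
  · filter_upwards [eventually_ge_atTop k] with n hn
    exact subset_starSet (hcov n) ⟨k, hn.trans (le_max_right _ _), rfl⟩
  · filter_upwards [hg (m A) ⟨A, rfl⟩] with n hn
    exact mem_starSet_of_mem (hU𝒰 A n) (hAU A n) (hm A n) ⟨m A n, hn.trans (le_max_left _ _), rfl⟩

end PsiSpace

/-- Bonanzinga–Matveev: `Ψ(𝒜)` is strongly star-Hurewicz iff `|𝒜| < 𝔟`. -/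
theorem stronglyStarHurewicz_psiSpace_iff (𝒜 : Set (Set ℕ)) (had : AlmostDisjoint 𝒜) :
    StronglyStarHurewicz (PsiSpace 𝒜) ↔ Cardinal.mk ↥𝒜 < bNum :=
  ⟨PsiSpace.mk_lt_bNum_of_stronglyStarHurewicz,
    PsiSpace.stronglyStarHurewicz_of_mk_lt_bNum had.1⟩
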